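/- arXiv:2111.10883 — 2 statements merged into one kernel-verified Lean document; each statement's English description precedes it below -/
import Mathlib

section
/- Let g be analytic on 𝔻 satisfying z·g'(z) = q(z)·g(z) with g(z) = z + Σ_{n≥2} g_n z^n and q(z) = 1 + Σ_{n≥1} q_n z^n analytic with |q_n| ≤ 2 for all n ≥ 1. Then the coefficients satisfy the recursion (n−1)·g_n = Σ_{k=1}^{n−1} g_{n−k} q_k (with g_1 = 1) for all n ≥ 2, and consequently |g_n| ≤ n for all n ≥ 1. -/
/-!
Both sides of `z G' = Q G` are power series on the disk: the left one with coefficients `n g_n`,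
the right one with the Cauchy product of `q` and `g`. Uniqueness of coefficients gives
`n g_n = ∑_{k=0}^{n} q_k g_{n-k}`, which is the recursion once the terms `k = 0` (`q_0 = 1`) and
`k = n` (`g_0 = 0`) are split off. Strong induction then gives
`(n - 1) |g_n| ≤ 2 ∑_{k=1}^{n-1} (n - k) = n (n - 1)`.
-/

open Metric

noncomputable def majorant (a : ℕ → ℂ) (r : ℝ) : ENNReal :=
  ∑' n, (‖a n‖₊ : ENNReal) * (ENNReal.ofReal r) ^ n

open FormalMultilinearSeries Finset Filter Topology

section PowerSeries

variable {𝕜 : Type*} [DenselyNormedField 𝕜] {a b : ℕ → 𝕜} {F H : 𝕜 → 𝕜} {r : ℝ}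

theorem hasFPowerSeriesOnBall_ofScalars_of_hasSum (hr : 0 < r)
    (h : ∀ z ∈ ball (0 : 𝕜) r, HasSum (fun n => a n * z ^ n) (F z)) :
    HasFPowerSeriesOnBall F (ofScalars 𝕜 a) 0 (ENNReal.ofReal r) where
  r_le := by
    refine ENNReal.le_of_forall_nnreal_lt fun ρ hρ => ?_
    obtain ⟨z, hρz, hzr⟩ := NormedField.exists_lt_norm_lt 𝕜 ρ.coe_nonneg
      (ENNReal.coe_lt_ofReal.1 hρ)
    have hz : Tendsto (fun n => ‖ofScalars 𝕜 a n‖ * (‖z‖₊ : ℝ) ^ n) atTop (𝓝 0) := by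
      simpa only [ofScalars_norm, coe_nnnorm, norm_mul, norm_pow, norm_zero] using
        (h z (mem_ball_zero_iff.2 hzr)).summable.tendsto_atTop_zero.norm
    exact (ENNReal.coe_le_coe.2 hρz.le).trans ((ofScalars 𝕜 a).le_radius_of_tendsto hz)
  r_pos := ENNReal.ofReal_pos.2 hr
  hasSum {y} hy := by
    simpa only [zero_add, ofScalars_apply_eq, smul_eq_mul] using
      h y (by rwa [eball_ofReal] at hy)

theorem summable_norm_mul_pow_of_hasSum
    (h : ∀ z ∈ ball (0 : 𝕜) r, HasSum (fun n => a n * z ^ n) (F z)) {z : 𝕜}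
    (hz : z ∈ ball (0 : 𝕜) r) : Summable fun n => ‖a n * z ^ n‖ := by
  have hp := hasFPowerSeriesOnBall_ofScalars_of_hasSum (pos_of_mem_ball hz) h
  simpa only [ofScalars_apply_eq, smul_eq_mul] using
    (ofScalars 𝕜 a).summable_norm_apply (eball_subset_eball hp.r_le
      (by rwa [eball_ofReal]))

theorem eq_of_hasSum_mul_pow (hr : 0 < r)
    (ha : ∀ z ∈ ball (0 : 𝕜) r, HasSum (fun n => a n * z ^ n) (F z))
    (hb : ∀ z ∈ ball (0 : 𝕜) r, HasSum (fun n => b n * z ^ n) (F z)) : a = b :=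
  ofScalars_series_injective 𝕜 𝕜 <|
    (hasFPowerSeriesOnBall_ofScalars_of_hasSum hr ha).hasFPowerSeriesAt.eq_formalMultilinearSeries
      (hasFPowerSeriesOnBall_ofScalars_of_hasSum hr hb).hasFPowerSeriesAt

variable [CompleteSpace 𝕜]

theorem hasSum_sum_range_mul_mul_pow_of_hasSum
    (ha : ∀ z ∈ ball (0 : 𝕜) r, HasSum (fun n => a n * z ^ n) (F z))
    (hb : ∀ z ∈ ball (0 : 𝕜) r, HasSum (fun n => b n * z ^ n) (H z)) {z : 𝕜}
    (hz : z ∈ ball (0 : 𝕜) r) :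
    HasSum (fun n => (∑ k ∈ range (n + 1), a k * b (n - k)) * z ^ n) (F z * H z) := by
  have h := hasSum_sum_range_mul_of_summable_norm (summable_norm_mul_pow_of_hasSum ha hz)
    (summable_norm_mul_pow_of_hasSum hb hz)
  rw [(ha z hz).tsum_eq, (hb z hz).tsum_eq] at h
  refine h.congr_fun fun n => ?_
  rw [sum_mul]
  refine sum_congr rfl fun k hk => ?_
  rw [← pow_mul_pow_sub z (Nat.le_of_lt_succ (mem_range.1 hk))]
  ring

theorem hasSum_natCast_mul_mul_pow_of_hasSum
    (h : ∀ z ∈ ball (0 : 𝕜) r, HasSum (fun n => a n * z ^ n) (F z)) {z : 𝕜}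
    (hz : z ∈ ball (0 : 𝕜) r) :
    HasSum (fun n => n * a n * z ^ n) (z * deriv F z) := by
  have hp := hasFPowerSeriesOnBall_ofScalars_of_hasSum (pos_of_mem_ball hz) h
  have hderiv := (ContinuousLinearMap.apply 𝕜 𝕜 z).hasSum (hp.fderiv.hasSum (by rwa [eball_ofReal]))
  have hterm (n : ℕ) : (ofScalars 𝕜 a).derivSeries n (fun _ => z) z
      = (n + 1 : ℕ) * a (n + 1) * z ^ (n + 1) := by
    rw [derivSeries_apply_diag, ofScalars_apply_eq, nsmul_eq_mul, smul_eq_mul]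
    ring
  simp only [ContinuousLinearMap.apply_apply, hterm, zero_add] at hderiv
  rw [← fderiv_apply_one_eq_deriv, ← smul_eq_mul, ← map_smul, smul_eq_mul, mul_one]
  exact (hasSum_nat_add_iff' 1).1 (by simpa using hderiv)

theorem natCast_mul_eq_sum_range_of_mul_deriv_eq_mul {g q : ℕ → 𝕜} {G Q : 𝕜 → 𝕜} (hr : 0 < r)
    (hG : ∀ z ∈ ball (0 : 𝕜) r, HasSum (fun n => g n * z ^ n) (G z))
    (hQ : ∀ z ∈ ball (0 : 𝕜) r, HasSum (fun n => q n * z ^ n) (Q z))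
    (heq : ∀ z ∈ ball (0 : 𝕜) r, z * deriv G z = Q z * G z) (n : ℕ) :
    n * g n = ∑ k ∈ range (n + 1), q k * g (n - k) :=
  congrFun (eq_of_hasSum_mul_pow (a := fun n => n * g n) hr
    (fun z hz => heq z hz ▸ hasSum_natCast_mul_mul_pow_of_hasSum hG hz)
    (fun _ hz => hasSum_sum_range_mul_mul_pow_of_hasSum hQ hG hz)) n

end PowerSeries

theorem sub_one_mul_eq_sum_Icc {R : Type*} [CommRing R] {g q : ℕ → R} (hg0 : g 0 = 0)
    (hq0 : q 0 = 1) {n : ℕ} (h : n * g n = ∑ k ∈ range (n + 1), q k * g (n - k)) :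
    (n - 1) * g n = ∑ k ∈ Icc 1 (n - 1), g (n - k) * q k := by
  rcases n with _ | m
  · simp [hg0]
  · rw [sum_range_succ, sum_range_succ'] at h
    rw [add_tsub_cancel_right, ← Ico_add_one_right_eq_Icc, sum_Ico_eq_sum_range]
    simp only [Nat.sub_self, hg0, hq0, mul_zero, add_zero, Nat.sub_zero, one_mul] at h
    simp only [add_tsub_cancel_right, add_comm 1, mul_comm (g _), Nat.add_sub_add_right] at h ⊢
    push_cast at h ⊢
    linear_combination h

theorem sum_Icc_add_one_sub (m : ℕ) : ∑ k ∈ Icc 1 m, ((m : ℝ) + 1 - k) = m * (m + 1) / 2 := by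
  induction m with
  | zero => simp
  | succ m ih =>
    have hshift : ∑ k ∈ Icc 1 m, ((m : ℝ) + 1 + 1 - k) = ∑ k ∈ Icc 1 m, ((m : ℝ) + 1 - k) + m := by
      simp [add_sub_right_comm _ (1 : ℝ), sum_add_distrib]
    rw [sum_Icc_succ_top (by omega), Nat.cast_succ, hshift, ih]
    ring

theorem norm_le_of_sub_one_mul_eq_sum_Icc {𝕜 : Type*} [RCLike 𝕜] {g q : ℕ → 𝕜} (hg1 : ‖g 1‖ ≤ 1)
    (hq : ∀ k, 1 ≤ k → ‖q k‖ ≤ 2)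
    (hrec : ∀ n : ℕ, 2 ≤ n → ((n : 𝕜) - 1) * g n = ∑ k ∈ Icc 1 (n - 1), g (n - k) * q k)
    (n : ℕ) (hn : 1 ≤ n) : ‖g n‖ ≤ n := by
  induction n using Nat.strong_induction_on with
  | _ n ih =>
  obtain rfl | hn2 := hn.eq_or_lt
  · simpa using hg1
  obtain ⟨m, rfl⟩ := Nat.exists_eq_add_one_of_ne_zero (by omega : n ≠ 0)
  have hrec' := hrec (m + 1) (by omega)
  simp only [Nat.cast_succ, add_sub_cancel_right, add_tsub_cancel_right] at hrec'
  have hbound : (m : ℝ) * ‖g (m + 1)‖ ≤ m * (m + 1) := calc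
    (m : ℝ) * ‖g (m + 1)‖ = ‖∑ k ∈ Icc 1 m, g (m + 1 - k) * q k‖ := by
      rw [← hrec', norm_mul, RCLike.norm_natCast]
    _ ≤ ∑ k ∈ Icc 1 m, ‖g (m + 1 - k)‖ * ‖q k‖ := norm_sum_le_of_le _ fun k _ => (norm_mul _ _).le
    _ ≤ ∑ k ∈ Icc 1 m, ((m : ℝ) + 1 - k) * 2 := by
      refine sum_le_sum fun k hk => ?_
      obtain ⟨hk1, hkm⟩ := mem_Icc.1 hk
      have hgk := ih (m + 1 - k) (by omega) (by omega)
      rw [Nat.cast_sub (by omega), Nat.cast_succ] at hgk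
      exact mul_le_mul hgk (hq k hk1) (norm_nonneg _) (by linarith [(Nat.cast_le (α := ℝ)).2 hkm])
    _ = m * (m + 1) := by rw [← sum_mul, sum_Icc_add_one_sub]; ring
  push_cast
  exact le_of_mul_le_mul_left hbound (by exact_mod_cast Nat.succ_lt_succ_iff.1 hn2)

theorem starlike_coeff_recursion (G Q : ℂ → ℂ) (g q : ℕ → ℂ)
    (hG : ∀ z ∈ ball (0:ℂ) 1, HasSum (fun n => g n * z ^ n) (G z))
    (hQ : ∀ z ∈ ball (0:ℂ) 1, HasSum (fun n => q n * z ^ n) (Q z))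
    (hg0 : g 0 = 0) (hg1 : g 1 = 1) (hq0 : q 0 = 1)
    (hqb : ∀ n, 1 ≤ n → ‖q n‖ ≤ 2)
    (heq : ∀ z ∈ ball (0:ℂ) 1, z * deriv G z = Q z * G z) :
    (∀ n : ℕ, 2 ≤ n → ((n : ℂ) - 1) * g n = ∑ k ∈ Finset.Icc 1 (n - 1), g (n - k) * q k) ∧
    (∀ n, 1 ≤ n → ‖g n‖ ≤ n) := by
  have hrec (n : ℕ) (_ : 2 ≤ n) :
      ((n : ℂ) - 1) * g n = ∑ k ∈ Icc 1 (n - 1), g (n - k) * q k :=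
    sub_one_mul_eq_sum_Icc hg0 hq0
      (natCast_mul_eq_sum_range_of_mul_deriv_eq_mul one_pos hG hQ heq n)
  exact ⟨hrec, norm_le_of_sub_one_mul_eq_sum_Icc (by simp [hg1]) hqb hrec⟩
end

section
/- Let f : 𝔻 → ℂ be analytic with |f(z)| ≤ 1 on 𝔻, and let φ : 𝔻 → 𝔻 be analytic with φ(0) = 0. Then the majorant series of f ∘ φ satisfies M_r(f∘φ) ≤ 1 for all 0 ≤ r ≤ 1/3. -/
/-!
Since `‖f ∘ φ‖ ≤ 1` on the disc, this is Bohr's theorem for `g = f ∘ φ = ∑ cₙ zⁿ`. Averaging `g`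
over the `n`-th roots of unity gives a function of `zⁿ`; hence `h(w) = ∑ₘ c_{mn} wᵐ` is again
bounded by `1`, with `h 0 = c₀` and `h' 0 = cₙ`. The Schwarz–Pick lemma at the origin then gives
Wiener's inequality `‖cₙ‖ ≤ 1 - ‖c₀‖²` for `n ≥ 1`, and for `r ≤ 1/3`
`M_r ≤ ‖c₀‖ + (1 - ‖c₀‖²) r / (1 - r) ≤ ‖c₀‖ + (1 - ‖c₀‖²) / 2 ≤ 1`.
-/

open Metric

open Set Finset Complex Topology
open scoped ComplexConjugate

theorem Metric.eball_one_eq_ball {α : Type*} [PseudoMetricSpace α] (x : α) :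
    eball x 1 = ball x 1 := by
  rw [← ENNReal.coe_one, Metric.eball_coe, NNReal.coe_one]

theorem IsPrimitiveRoot.geom_sum_pow_eq_ite {R : Type*} [CommRing R] [IsDomain R] {ω : R} {n : ℕ}
    (hω : IsPrimitiveRoot ω n) (k : ℕ) :
    ∑ j ∈ range n, (ω ^ k) ^ j = if n ∣ k then (n : R) else 0 := by
  split_ifs with hk
  · simp [(hω.pow_eq_one_iff_dvd k).2 hk]
  · have hne : ω ^ k - 1 ≠ 0 := sub_ne_zero.2 fun h => hk ((hω.pow_eq_one_iff_dvd k).1 h)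
    refine eq_zero_of_ne_zero_of_mul_left_eq_zero hne ?_
    rw [mul_geom_sum, ← pow_mul, mul_comm, pow_mul, hω.pow_eq_one, one_pow, sub_self]

theorem hasFPowerSeriesOnBall_ofScalars_of_hasSum_s18 {a : ℕ → ℂ} {h : ℂ → ℂ}
    (hs : ∀ z ∈ ball (0 : ℂ) 1, HasSum (fun n => a n * z ^ n) (h z)) :
    HasFPowerSeriesOnBall h (FormalMultilinearSeries.ofScalars ℂ a) 0 1 := by
  set p := FormalMultilinearSeries.ofScalars ℂ a
  have hrad : 1 ≤ p.radius := by
    refine ENNReal.le_of_forall_nnreal_lt fun r hr => p.le_radius_of_tendsto (l := 0) ?_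
    have hr' : (r : ℂ) ∈ ball (0 : ℂ) 1 := by
      simpa using ENNReal.coe_lt_one_iff.1 hr
    simpa [p, FormalMultilinearSeries.ofScalars_norm] using
      ((hs _ hr').summable.tendsto_atTop_zero).norm
  refine ⟨hrad, one_pos, fun {y} hy => ?_⟩
  have hy' : y ∈ ball (0 : ℂ) 1 := by
    rwa [eball_one_eq_ball] at hy
  simpa [p, FormalMultilinearSeries.ofScalars_apply_eq, mul_comm] using hs y hy'

theorem Complex.normSq_one_sub_conj_mul_sub_normSq_sub (a x : ℂ) :
    normSq (1 - conj a * x) - normSq (x - a) = (1 - normSq a) * (1 - normSq x) := by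
  simp only [normSq_apply, sub_re, sub_im, mul_re, mul_im, one_re, one_im, conj_re, conj_im]
  ring

theorem Complex.norm_sub_le_norm_one_sub_conj_mul {a x : ℂ} (ha : ‖a‖ ≤ 1) (hx : ‖x‖ ≤ 1) :
    ‖x - a‖ ≤ ‖1 - conj a * x‖ := by
  have ha' : normSq a ≤ 1 := by rw [normSq_eq_norm_sq]; exact pow_le_one₀ (norm_nonneg a) ha
  have hx' : normSq x ≤ 1 := by rw [normSq_eq_norm_sq]; exact pow_le_one₀ (norm_nonneg x) hx
  have h := normSq_one_sub_conj_mul_sub_normSq_sub a x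
  rw [norm_def, norm_def]
  exact Real.sqrt_le_sqrt (by nlinarith)

theorem deriv_eq_zero_of_isMaxOn_norm {h : ℂ → ℂ} {c : ℂ} {R : ℝ}
    (hd : DifferentiableOn ℂ h (ball c R)) (hR : 0 < R) (hmax : IsMaxOn (norm ∘ h) (ball c R) c) :
    deriv h c = 0 := by
  have hball : ball c R ∈ 𝓝 c := ball_mem_nhds c hR
  have hconst : h =ᶠ[𝓝 c] fun _ => h c := Complex.eventually_eq_of_isLocalMax_norm
    (Filter.mem_of_superset hball fun z hz => hd.differentiableAt (isOpen_ball.mem_nhds hz))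
    (hmax.isLocalMax hball)
  rw [hconst.deriv_eq, deriv_const]

theorem norm_deriv_le_one_sub_sq_of_mapsTo_ball {h : ℂ → ℂ}
    (hd : DifferentiableOn ℂ h (ball 0 1)) (hmaps : MapsTo h (ball 0 1) (closedBall 0 1)) :
    ‖deriv h 0‖ ≤ 1 - ‖h 0‖ ^ 2 := by
  have hnorm : ∀ z ∈ ball (0 : ℂ) 1, ‖h z‖ ≤ 1 := fun z hz => mem_closedBall_zero_iff.1 (hmaps hz)
  have hball : ball (0 : ℂ) 1 ∈ 𝓝 0 := ball_mem_nhds 0 one_pos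
  set a := h 0 with ha_def
  rcases (hnorm 0 (mem_ball_self one_pos)).eq_or_lt with ha | ha
  · have hmax : IsMaxOn (norm ∘ h) (ball 0 1) 0 := fun z hz => (hnorm z hz).trans ha.ge
    rw [deriv_eq_zero_of_isMaxOn_norm hd one_pos hmax, ha]
    norm_num
  · set F : ℂ → ℂ := fun w => (h w - a) / (1 - conj a * h w)
    have hden : (1 : ℂ) - conj a * a = ((1 - ‖a‖ ^ 2 : ℝ) : ℂ) := by
      rw [conj_mul']; push_cast; ring
    have hden_pos : 0 < 1 - ‖a‖ ^ 2 := by nlinarith [norm_nonneg a]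
    have hden_ne : (1 : ℂ) - conj a * a ≠ 0 := by
      rw [hden]; exact_mod_cast hden_pos.ne'
    have hden_ne_of_mem : ∀ w ∈ ball (0 : ℂ) 1, 1 - conj a * h w ≠ 0 := by
      intro w hw
      have hlt : ‖conj a * h w‖ < 1 := by
        rw [norm_mul, RCLike.norm_conj]
        nlinarith [hnorm w hw, norm_nonneg a, norm_nonneg (h w)]
      exact sub_ne_zero.2 fun h1 => by simp [← h1] at hlt
    have hFd : DifferentiableOn ℂ F (ball 0 1) :=
      (hd.sub_const a).div ((differentiableOn_const 1).sub (hd.const_mul _)) hden_ne_of_mem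
    have hFmaps : MapsTo F (ball 0 1) (closedBall (F 0) 1) := by
      intro w hw
      have hF0 : F 0 = 0 := by simp [F, a]
      rw [hF0, mem_closedBall_zero_iff, norm_div]
      exact div_le_one_of_le₀ (norm_sub_le_norm_one_sub_conj_mul ha.le (hnorm w hw)) (norm_nonneg _)
    have hF' : deriv F 0 = deriv h 0 / (1 - conj a * a) := by
      have hh : HasDerivAt h (deriv h 0) 0 :=
        (hd.differentiableAt hball).hasDerivAt
      have hF : HasDerivAt F
          ((deriv h 0 * (1 - conj a * h 0) - (h 0 - a) * (0 - conj a * deriv h 0))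
            / (1 - conj a * h 0) ^ 2) 0 :=
        (hh.sub_const a).div ((hasDerivAt_const 0 1).sub (hh.const_mul _))
          (hden_ne_of_mem 0 (mem_ball_self one_pos))
      rw [hF.deriv, ← ha_def]
      field_simp
      ring
    have := norm_deriv_le_one_of_mapsTo_ball hFd hFmaps one_pos
    rwa [hF', norm_div, hden, norm_real, Real.norm_of_nonneg hden_pos.le,
      div_le_one hden_pos] at this

theorem hasSum_ite_dvd_mul_pow {a : ℕ → ℂ} {g : ℂ → ℂ} {ω z : ℂ} {n : ℕ}
    (hω : IsPrimitiveRoot ω n) (hn : n ≠ 0)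
    (hs : ∀ j, HasSum (fun k => a k * (ω ^ j * z) ^ k) (g (ω ^ j * z))) :
    HasSum (fun k => if n ∣ k then a k * z ^ k else 0)
      ((n : ℂ)⁻¹ * ∑ j ∈ range n, g (ω ^ j * z)) := by
  refine ((hasSum_sum fun j _ => hs j).mul_left (n : ℂ)⁻¹).congr_fun fun k => ?_
  have hterm : ∀ j, a k * (ω ^ j * z) ^ k = (ω ^ k) ^ j * (a k * z ^ k) := fun j => by
    rw [mul_pow, ← pow_mul, mul_comm j k, pow_mul]; ring
  rw [sum_congr rfl fun j _ => hterm j, ← sum_mul, hω.geom_sum_pow_eq_ite]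
  split_ifs <;> simp [hn]

theorem exists_hasSum_coeff_mul_of_mapsTo {a : ℕ → ℂ} {g : ℂ → ℂ}
    (hs : ∀ z ∈ ball (0 : ℂ) 1, HasSum (fun k => a k * z ^ k) (g z))
    (hg : MapsTo g (ball 0 1) (closedBall 0 1)) {n : ℕ} (hn : n ≠ 0) :
    ∃ h : ℂ → ℂ, MapsTo h (ball 0 1) (closedBall 0 1) ∧
      ∀ w ∈ ball (0 : ℂ) 1, HasSum (fun m => a (m * n) * w ^ m) (h w) := by
  set ω := exp (2 * Real.pi * I / n)
  have hω : IsPrimitiveRoot ω n := isPrimitiveRoot_exp n hn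
  have hω_norm : ‖ω‖ = 1 := hω.norm'_eq_one hn
  have hmem : ∀ w ∈ ball (0 : ℂ) 1, ∀ j : ℕ, ω ^ j * w ^ (n⁻¹ : ℂ) ∈ ball (0 : ℂ) 1 := by
    intro w hw j
    rw [mem_ball_zero_iff] at hw ⊢
    rw [norm_mul, norm_pow, hω_norm, one_pow, one_mul, norm_cpow_inv_nat]
    exact Real.rpow_lt_one (norm_nonneg w) hw (by positivity)
  refine ⟨fun w => (n : ℂ)⁻¹ * ∑ j ∈ range n, g (ω ^ j * w ^ (n⁻¹ : ℂ)), fun w hw => ?_,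
    fun w hw => ?_⟩
  · rw [mem_closedBall_zero_iff, norm_mul, norm_inv, norm_natCast]
    calc (n : ℝ)⁻¹ * ‖∑ j ∈ range n, g (ω ^ j * w ^ (n⁻¹ : ℂ))‖
        ≤ (n : ℝ)⁻¹ * ∑ _j ∈ range n, 1 := by
          gcongr
          exact (norm_sum_le _ _).trans <| sum_le_sum fun j _ =>
            mem_closedBall_zero_iff.1 (hg (hmem w hw j))
      _ = 1 := by simp [hn]
  · have hsum := hasSum_ite_dvd_mul_pow hω hn fun j => hs _ (hmem w hw j)
    rw [← (mul_left_injective₀ hn).hasSum_iff] at hsum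
    · simpa [Function.comp_def, pow_mul, mul_comm _ n, cpow_nat_inv_pow w hn] using hsum
    · intro k hk
      rw [if_neg]
      rintro ⟨m, rfl⟩
      exact hk ⟨m, mul_comm m n⟩

theorem norm_coeff_le_one_sub_sq {a : ℕ → ℂ} {g : ℂ → ℂ}
    (hs : ∀ z ∈ ball (0 : ℂ) 1, HasSum (fun k => a k * z ^ k) (g z))
    (hg : MapsTo g (ball 0 1) (closedBall 0 1)) {n : ℕ} (hn : n ≠ 0) :
    ‖a n‖ ≤ 1 - ‖a 0‖ ^ 2 := by
  obtain ⟨h, hmaps, hh⟩ := exists_hasSum_coeff_mul_of_mapsTo hs hg hn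
  have hp := hasFPowerSeriesOnBall_ofScalars_of_hasSum_s18 hh
  have hd : DifferentiableOn ℂ h (ball 0 1) := by
    simpa only [eball_one_eq_ball] using hp.differentiableOn
  have h0 : h 0 = a 0 := by simpa using (hp.hasFPowerSeriesAt.coeff_zero 0).symm
  have h1 : deriv h 0 = a n := by simpa using hp.hasFPowerSeriesAt.deriv
  simpa [h0, h1] using norm_deriv_le_one_sub_sq_of_mapsTo_ball hd hmaps

theorem majorant_eq_ofReal_tsum {a : ℕ → ℂ} {r : ℝ} (hr : 0 ≤ r)
    (hs : Summable fun n => ‖a n‖ * r ^ n) :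
    majorant a r = ENNReal.ofReal (∑' n, ‖a n‖ * r ^ n) := by
  rw [majorant, ENNReal.ofReal_tsum_of_nonneg (fun n => by positivity) hs]
  congr 1 with n
  rw [ENNReal.ofReal_mul (norm_nonneg _), ENNReal.ofReal_pow hr, ← coe_nnnorm,
    ENNReal.ofReal_coe_nnreal]

theorem majorant_le_one_of_norm_le_one_sub_sq {a : ℕ → ℂ}
    (ha : ∀ n, n ≠ 0 → ‖a n‖ ≤ 1 - ‖a 0‖ ^ 2) {r : ℝ} (hr₀ : 0 ≤ r) (hr : r ≤ 1 / 3) :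
    majorant a r ≤ 1 := by
  have hr₁ : r < 1 := by linarith
  have hgap : 0 ≤ 1 - ‖a 0‖ ^ 2 := (norm_nonneg _).trans (ha 1 one_ne_zero)
  have ha_le : ∀ n, ‖a n‖ ≤ 1 := fun n => by
    rcases eq_or_ne n 0 with rfl | hn
    · nlinarith [norm_nonneg (a 0)]
    · linarith [ha n hn, sq_nonneg ‖a 0‖]
  have hgeom := summable_geometric_of_lt_one hr₀ hr₁
  have hs : Summable fun n => ‖a n‖ * r ^ n :=
    hgeom.of_nonneg_of_le (fun n => by positivity)
      fun n => mul_le_of_le_one_left (by positivity) (ha_le n)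
  have htail : ∑' n, ‖a (n + 1)‖ * r ^ (n + 1) ≤ (1 - ‖a 0‖ ^ 2) * (r / (1 - r)) :=
    calc ∑' n, ‖a (n + 1)‖ * r ^ (n + 1)
        ≤ ∑' n, (1 - ‖a 0‖ ^ 2) * r * r ^ n :=
          ((summable_nat_add_iff 1).2 hs).tsum_le_tsum
            fun n => by
              rw [pow_succ', mul_assoc]
              exact mul_le_mul_of_nonneg_right (ha _ n.succ_ne_zero) (by positivity)
            (hgeom.mul_left _)
      _ = (1 - ‖a 0‖ ^ 2) * (r / (1 - r)) := by
          rw [tsum_mul_left, tsum_geometric_of_lt_one hr₀ hr₁]; ring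
  have hratio : r / (1 - r) ≤ 1 / 2 := by rw [div_le_iff₀ (by linarith)]; linarith
  rw [majorant_eq_ofReal_tsum hr₀ hs, ← ENNReal.ofReal_one, hs.tsum_eq_zero_add]
  refine ENNReal.ofReal_le_ofReal ?_
  nlinarith [mul_le_mul_of_nonneg_left hratio hgap, sq_nonneg (1 - ‖a 0‖)]

theorem von_neumann_type_inequality_general (f φ : ℂ → ℂ) (c : ℕ → ℂ)
    (hbd : ∀ z ∈ ball (0:ℂ) 1, ‖f z‖ ≤ 1)
    (hφmap : ∀ z ∈ ball (0:ℂ) 1, φ z ∈ ball (0:ℂ) 1)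
    (hc : ∀ z ∈ ball (0:ℂ) 1, HasSum (fun n => c n * z ^ n) (f (φ z))) :
    ∀ r : ℝ, 0 ≤ r → r ≤ 1/3 → majorant c r ≤ 1 := by
  have hmaps : MapsTo (f ∘ φ) (ball 0 1) (closedBall 0 1) := fun z hz =>
    mem_closedBall_zero_iff.2 (hbd _ (hφmap z hz))
  exact fun r hr₀ hr => majorant_le_one_of_norm_le_one_sub_sq
    (fun n hn => norm_coeff_le_one_sub_sq (n := n) hc hmaps hn) hr₀ hr

theorem von_neumann_type_inequality (f φ : ℂ → ℂ) (c : ℕ → ℂ)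
    (hf : DifferentiableOn ℂ f (ball 0 1))
    (hbd : ∀ z ∈ ball (0:ℂ) 1, ‖f z‖ ≤ 1)
    (hφ : DifferentiableOn ℂ φ (ball 0 1))
    (hφmap : ∀ z ∈ ball (0:ℂ) 1, φ z ∈ ball (0:ℂ) 1)
    (hφ0 : φ 0 = 0)
    (hc : ∀ z ∈ ball (0:ℂ) 1, HasSum (fun n => c n * z ^ n) (f (φ z))) :
    ∀ r : ℝ, 0 ≤ r → r ≤ 1/3 → majorant c r ≤ 1 :=
  von_neumann_type_inequality_general f φ c hbd hφmap hc
end
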